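/- Let T be a nondegenerate triangle in ℝ² with longest side of length ℓ, and let h be the length of the altitude from the opposite vertex to the longest side. Then 0 < h ≤ (√3/2)·ℓ, and h = (√3/2)·ℓ holds if and only if T is equilateral. -/
import Mathlib


open MeasureTheory Set EuclideanGeometry
open scoped RealInnerProductSpace

noncomputable section

abbrev E2 : Type := EuclideanSpace ℝ (Fin 2)

/-- The Rayleigh quotient of a function `u` on the domain `Ω ⊆ ℝ²`. -/
def rayleigh (Ω : Set E2) (u : E2 → ℝ) : ℝ :=
  (∫ x in Ω, ‖fderiv ℝ u x‖ ^ 2) / (∫ x in Ω, (u x) ^ 2)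

/-- `u` is not almost everywhere zero on `Ω`. -/
def NotAEZero (Ω : Set E2) (u : E2 → ℝ) : Prop :=
  ¬ (∀ᵐ x ∂(volume.restrict Ω), u x = 0)

/-- The first mixed Dirichlet–Neumann eigenvalue of the Laplacian on `Ω`,
with Dirichlet condition on `D` and Neumann condition on the rest of the boundary,
defined variationally. -/
def firstMixedEig (Ω D : Set E2) : ℝ :=
  sInf { r | ∃ u : E2 → ℝ, ContDiff ℝ (⊤ : ℕ∞) u ∧ (∀ x ∈ D, u x = 0) ∧
    NotAEZero Ω u ∧ r = rayleigh Ω u }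

/-- The `k`-th mixed Dirichlet–Neumann eigenvalue of the Laplacian on `Ω`,
with Dirichlet condition on `D`, via the Courant–Fischer min–max principle. -/
def mixedEig (Ω D : Set E2) (k : ℕ) : ℝ :=
  sInf { r | ∃ V : Submodule ℝ (E2 → ℝ), Module.finrank ℝ V = k ∧
    (∀ u ∈ V, ContDiff ℝ (⊤ : ℕ∞) u ∧ ∀ x ∈ D, u x = 0) ∧
    r = sSup { q | ∃ u ∈ V, NotAEZero Ω u ∧ q = rayleigh Ω u } }

/-- The open triangle with vertices `A`, `B`, `C`. -/
def triangleO (A B C : E2) : Set E2 := interior (convexHull ℝ ({A, B, C} : Set E2))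

/-- The area of a plane region. -/
def area2 (s : Set E2) : ℝ := (volume s).toReal

/-- The open rectangle `(0,a) × (0,b)`. -/
def rectO (a b : ℝ) : Set E2 := {p : E2 | p 0 ∈ Ioo 0 a ∧ p 1 ∈ Ioo 0 b}

/-- The closed rectangle `[0,a] × [0,b]`. -/
def rectC (a b : ℝ) : Set E2 := {p : E2 | p 0 ∈ Icc 0 a ∧ p 1 ∈ Icc 0 b}

/-- The two vertical sides of the closed rectangle `[0,a] × [0,b]`. -/
def vSides (a b : ℝ) : Set E2 := {p : E2 | (p 0 = 0 ∨ p 0 = a) ∧ p 1 ∈ Icc 0 b}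

/-- The two horizontal sides of the closed rectangle `[0,a] × [0,b]`. -/
def hSides (a b : ℝ) : Set E2 := {p : E2 | p 0 ∈ Icc 0 a ∧ (p 1 = 0 ∨ p 1 = b)}

/-- `F(y) = Σ_{j=0}^∞ ((y − j²)₊)^{1/2}`. -/
def Ffun (y : ℝ) : ℝ := ∑' j : ℕ, Real.sqrt (max (y - (j : ℝ) ^ 2) 0)

/-- `M`, the inverse function of `F` on `[0,∞)`. -/
def Mfun (x : ℝ) : ℝ := sInf {y : ℝ | 0 ≤ y ∧ x ≤ Ffun y}

set_option maxHeartbeats 1000000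

/-- Let `T = △ABC` be a nondegenerate triangle whose longest side is `BC`
(of length `ℓ = dist B C`), and let `h` be the distance from the opposite vertex `A` to the
line containing `BC`. Then `0 < h ≤ (√3/2)·ℓ`, and `h = (√3/2)·ℓ` iff `T` is equilateral. -/
theorem stmt_8 (A B C : E2)
    (hT : ¬ Collinear ℝ ({A, B, C} : Set E2))
    (hL1 : dist A C ≤ dist B C) (hL2 : dist A B ≤ dist B C) :
    0 < Metric.infDist A (affineSpan ℝ ({B, C} : Set E2) : Set E2) ∧
    Metric.infDist A (affineSpan ℝ ({B, C} : Set E2) : Set E2) ≤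
      Real.sqrt 3 / 2 * dist B C ∧
    (Metric.infDist A (affineSpan ℝ ({B, C} : Set E2) : Set E2) =
        Real.sqrt 3 / 2 * dist B C ↔
      dist A B = dist B C ∧ dist B C = dist C A) := by
  classical
  set v : E2 := C - B with hv
  set w : E2 := A - B with hw
  set L : ℝ := ⟪v, v⟫ with hLdef
  set a : ℝ := ⟪w, w⟫ with hadef
  set s : ℝ := ⟪w, v⟫ with hsdef
  have hBC : B ≠ C := by
    rintro rfl
    exact hT (by
      have : ({A, B, B} : Set E2) = {A, B} := by simp
      rw [this]; exact collinear_pair ℝ A B)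
  have hvne : v ≠ 0 := sub_ne_zero.mpr (Ne.symm hBC)
  have hnv : 0 < ‖v‖ := norm_pos_iff.mpr hvne
  have hLnorm : L = ‖v‖ ^ 2 := real_inner_self_eq_norm_sq v
  have hanorm : a = ‖w‖ ^ 2 := real_inner_self_eq_norm_sq w
  have hLpos : 0 < L := by rw [hLnorm]; positivity
  have expand : ∀ r : ℝ, ‖w - r • v‖ ^ 2 = a - 2*r*s + r^2*L := by
    intro r
    rw [norm_sub_sq_real, real_inner_smul_right, norm_smul, mul_pow, Real.norm_eq_abs, sq_abs,
      hLnorm, hanorm, hsdef]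
    ring
  -- key positivity : a * L - s^2 > 0
  have hCS : s * s ≤ a * L := real_inner_mul_inner_self_le w v
  clear_value L a s
  have hkey : 0 < a * L - s ^ 2 := by
    rcases lt_or_eq_of_le hCS with h | h
    · nlinarith
    · exfalso
      have hz : ‖w - (s / L) • v‖ ^ 2 = 0 := by
        rw [expand]; field_simp; nlinarith
      have hwv : w = (s / L) • v := by
        have h0 := (pow_eq_zero_iff (n := 2) (by norm_num)).mp hz
        exact sub_eq_zero.mp (norm_eq_zero.mp h0)
      apply hT
      rw [collinear_iff_of_mem (Set.mem_insert_of_mem _ (Set.mem_insert _ _) :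
        B ∈ ({A, B, C} : Set E2))]
      refine ⟨v, ?_⟩
      rintro p (rfl | rfl | rfl)
      · exact ⟨s / L, by rw [← hwv]; simp [hw]⟩
      · exact ⟨0, by simp⟩
      · exact ⟨1, by simp [hv]⟩

  -- basic distance facts
  have hdAB : dist A B = ‖w‖ := by rw [dist_eq_norm, hw]
  have hdBC : dist B C = ‖v‖ := by rw [dist_comm, dist_eq_norm, hv]
  have hdAC : dist A C = ‖w - v‖ := by
    rw [dist_eq_norm]
    congr 1
    rw [hw, hv]; abel
  have hdCA : dist C A = ‖w - v‖ := by rw [dist_comm]; exact hdAC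
  -- constraints
  have haL : a ≤ L := by
    rw [hanorm, hLnorm]
    have := hL2; rw [hdAB, hdBC] at this
    exact pow_le_pow_left₀ (norm_nonneg _) this 2
  have has : a ≤ 2 * s := by
    have h1 : ‖w - v‖ ^ 2 ≤ L := by
      rw [hLnorm]
      have := hL1; rw [hdAC, hdBC] at this
      exact pow_le_pow_left₀ (norm_nonneg _) this 2
    have h2 : ‖w - v‖ ^ 2 = a - 2 * 1 * s + 1 ^ 2 * L := by
      rw [← expand 1, one_smul]
    nlinarith
  have hapos : 0 < a := by nlinarith
  have hspos : 0 < s := by nlinarith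
  -- the distance from A to the line
  set d2 : ℝ := (a * L - s ^ 2) / L with hd2
  have hd2pos : 0 < d2 := div_pos hkey hLpos
  clear_value d2
  set h0 : ℝ := Real.sqrt d2 with hh0
  have hh0sq : h0 ^ 2 = d2 := Real.sq_sqrt hd2pos.le
  have hh0pos : 0 < h0 := Real.sqrt_pos.mpr hd2pos
  clear_value h0
  -- every point of the line is at distance ≥ h0 from A
  have hmem : ∀ Q ∈ (affineSpan ℝ ({B, C} : Set E2) : Set E2), h0 ≤ dist A Q := by
    intro Q hQ
    have hQ' : (Q - B) +ᵥ B ∈ line[ℝ, B, C] := by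
      have : (Q - B) +ᵥ B = Q := by simp
      rw [this]; exact hQ
    obtain ⟨r, hr⟩ := vadd_left_mem_affineSpan_pair.mp hQ'
    have hr' : r • v = Q - B := by rw [hv, ← vsub_eq_sub]; exact hr
    have hAQ : A - Q = w - r • v := by
      rw [hr', hw]; abel
    have hsq : d2 ≤ dist A Q ^ 2 := by
      rw [dist_eq_norm, hAQ, expand r, hd2, div_le_iff₀ hLpos]
      nlinarith [sq_nonneg (r * L - s)]
    calc h0 = Real.sqrt d2 := hh0
      _ ≤ Real.sqrt (dist A Q ^ 2) := Real.sqrt_le_sqrt hsq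
      _ = dist A Q := Real.sqrt_sq dist_nonneg
  -- the distance is attained at the foot of the perpendicular
  have hinf : Metric.infDist A (affineSpan ℝ ({B, C} : Set E2) : Set E2) = h0 := by
    have hBmem : B ∈ (affineSpan ℝ ({B, C} : Set E2) : Set E2) :=
      left_mem_affineSpan_pair ℝ B C
    refine le_antisymm ?_ ?_
    · set P : E2 := (s / L) • (C -ᵥ B) +ᵥ B with hP
      have hPmem : P ∈ (affineSpan ℝ ({B, C} : Set E2) : Set E2) :=
        smul_vsub_vadd_mem_affineSpan_pair (s / L) B C
      have hAP : A - P = w - (s / L) • v := by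
        rw [hP, hw, hv, vsub_eq_sub, vadd_eq_add]; abel
      have hdist : dist A P ^ 2 = d2 := by
        rw [dist_eq_norm, hAP, expand, hd2]
        field_simp
        ring
      have : dist A P = h0 := by
        rw [hh0, ← hdist, Real.sqrt_sq dist_nonneg]
      rw [← this]
      exact Metric.infDist_le_dist_of_mem hPmem
    · by_contra hlt
      push_neg at hlt
      obtain ⟨y, hy, hdy⟩ := (Metric.infDist_lt_iff ⟨B, hBmem⟩).mp hlt
      linarith [hmem y hy]
  rw [hinf]
  -- √3/2 * ℓ = √(3L)/2
  have hl : dist B C = Real.sqrt L := by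
    rw [hdBC, hLnorm, Real.sqrt_sq (norm_nonneg v)]
  have hrhs : Real.sqrt 3 / 2 * dist B C = Real.sqrt (3 * L) / 2 := by
    rw [hl, Real.sqrt_mul (by norm_num : (0:ℝ) ≤ 3)]
    ring
  refine ⟨hh0pos, ?_, ?_⟩
  · rw [hrhs, le_div_iff₀ (by norm_num : (0:ℝ) < 2)]
    have h4 : h0 * 2 = Real.sqrt (d2 * 4) := by
      rw [Real.sqrt_mul hd2pos.le, show (4:ℝ) = 2^2 by norm_num,
        Real.sqrt_sq (by norm_num : (0:ℝ) ≤ 2), hh0]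
    rw [h4]
    apply Real.sqrt_le_sqrt
    rw [hd2, div_mul_eq_mul_div, div_le_iff₀ hLpos]
    nlinarith [mul_nonneg (sub_nonneg.mpr haL) (sub_nonneg.mpr haL), sq_nonneg (2*s - a),
      sq_nonneg (a - L), mul_nonneg (sub_nonneg.mpr haL) hLpos.le]
  · constructor
    · intro heq
      have hsq : d2 = 3 / 4 * L := by
        have h1 : h0 ^ 2 = (Real.sqrt 3 / 2 * dist B C) ^ 2 := by rw [heq]
        rw [hh0sq, hl, mul_pow, div_pow,
          Real.sq_sqrt (by norm_num : (0:ℝ) ≤ 3),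
          Real.sq_sqrt hLpos.le] at h1
        linarith
      have hd2' : 4 * (a * L - s ^ 2) = 3 * L ^ 2 := by
        rw [hd2] at hsq
        field_simp at hsq
        linarith
      have haeqL : a = L := by
        nlinarith [sq_nonneg (2*s - a), mul_nonneg (sub_nonneg.mpr haL)
          (by nlinarith : (0:ℝ) ≤ 3 * L - a)]
      have hseq : a = 2 * s := by nlinarith [sq_nonneg (2*s - L)]
      constructor
      · rw [hdAB, hdBC]
        have : ‖w‖ ^ 2 = ‖v‖ ^ 2 := by rw [← hanorm, ← hLnorm, haeqL]
        rw [← Real.sqrt_sq (norm_nonneg w), this, Real.sqrt_sq (norm_nonneg v)]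
      · rw [hdBC, hdCA]
        have h2 : ‖w - v‖ ^ 2 = a - 2 * 1 * s + 1 ^ 2 * L := by
          rw [← expand 1, one_smul]
        have : ‖v‖ ^ 2 = ‖w - v‖ ^ 2 := by rw [← hLnorm, h2]; linarith
        rw [← Real.sqrt_sq (norm_nonneg v), this, Real.sqrt_sq (norm_nonneg _)]
    · rintro ⟨h1, h2⟩
      have e1 : a = L := by
        rw [hanorm, hLnorm, ← hdAB, ← hdBC, h1]
      have e2 : a = 2 * s := by
        have hx : ‖w - v‖ ^ 2 = a - 2 * 1 * s + 1 ^ 2 * L := by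
          rw [← expand 1, one_smul]
        have hy : ‖v‖ ^ 2 = ‖w - v‖ ^ 2 := by rw [← hdBC, ← hdCA, h2]
        rw [← hLnorm, hx] at hy
        linarith
      have hs2 : s = L / 2 := by linarith
      have hd2v : d2 = 3 * L / 4 := by
        rw [hd2, e1, hs2]
        field_simp
        ring
      rw [hrhs, hh0, hd2v]
      rw [show 3 * L / 4 = 3 * L * (1/2)^2 by ring,
        Real.sqrt_mul (by linarith : (0:ℝ) ≤ 3 * L),
        Real.sqrt_sq (by norm_num : (0:ℝ) ≤ 1/2)]
      ring


end
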